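/- arXiv:2306.08104 — 4 statements merged into one kernel-verified Lean document; each statement's English description precedes it below -/
import Mathlib

section
/- Let ϕ : S → T be a homomorphism of commutative rings with T noetherian, and let B_S ⊆ S and B_T ⊆ T be ideals such that B_T is contained in the radical of the ideal of T generated by ϕ(B_S). If I ⊆ T is a B_T-saturated ideal, then the preimage ϕ^{-1}(I) is a B_S-saturated ideal of S. -/
/-- The saturation `(I : B^∞) = {x ∈ R : x·B^k ⊆ I for some k ≥ 0}`, as a set. -/
def satSet {R : Type*} [CommRing R] (I B : Ideal R) : Set R :=
  {x | ∃ k : ℕ, ∀ g ∈ B ^ k, x * g ∈ I}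

/-- Let `ϕ : S → T` be a homomorphism of commutative rings with `T` noetherian, and let
`B_S ⊆ S`, `B_T ⊆ T` be ideals with `B_T` contained in the radical of the ideal generated by
`ϕ(B_S)`.  If `I ⊆ T` is `B_T`-saturated, then `ϕ⁻¹(I)` is `B_S`-saturated. -/
theorem preimage_of_saturated_is_saturated
    {S T : Type*} [CommRing S] [CommRing T] [IsNoetherianRing T]
    (ϕ : S →+* T) (BS : Ideal S) (BT : Ideal T)
    (hBT : BT ≤ (Ideal.map ϕ BS).radical)
    (I : Ideal T) (hI : satSet I BT = (I : Set T)) :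
    satSet (Ideal.comap ϕ I) BS = ((Ideal.comap ϕ I : Ideal S) : Set S) := by
  ext x
  simp only [SetLike.mem_coe]
  constructor
  · rintro ⟨k, hk⟩
    obtain ⟨n, hn⟩ := Ideal.exists_radical_pow_le_of_fg (Ideal.map ϕ BS)
      (IsNoetherian.noetherian _)
    have hBTn : BT ^ n ≤ Ideal.map ϕ BS :=
      le_trans (Ideal.pow_right_mono hBT n) hn
    have hpow : BT ^ (n * k) ≤ Ideal.map ϕ (BS ^ k) := by
      rw [pow_mul, Ideal.map_pow]
      exact Ideal.pow_right_mono hBTn k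
    have hsat : ϕ x ∈ satSet I BT := by
      refine ⟨n * k, fun h hh => ?_⟩
      have hh' : h ∈ Ideal.map ϕ (BS ^ k) := hpow hh
      rw [Ideal.map, Ideal.span] at hh'
      refine Submodule.span_induction ?_ ?_ ?_ ?_ hh'
      · rintro _ ⟨g, hg, rfl⟩
        rw [← map_mul]
        exact hk g hg
      · rw [mul_zero]; exact I.zero_mem
      · intro a b _ _ ha hb
        rw [mul_add]; exact I.add_mem ha hb
      · intro t a _ ha
        rw [smul_eq_mul, mul_comm t a, ← mul_assoc]
        exact I.mul_mem_right t ha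
    have : ϕ x ∈ (I : Set T) := hI ▸ hsat
    exact this
  · intro hx
    exact ⟨0, fun g _ => Ideal.mul_mem_right g _ hx⟩
end

section
/- Let k ≥ 1, let V_k ⊊ S*_k be a proper subspace, and let x^u be the largest monomial of degree k (with respect to the fixed monomial order) that does not lie in V_k. Then there exists at most one index i ∈ {0,1,…,n} such that c_i(x^u) ∉ S_1 ⌟ V_k. -/
open MvPolynomial

noncomputable section

/-- The contraction operator `c_i` (apolarity action of the `i`-th dual variable):
`c_i(x^u) = x^{u−e_i}` if `u_i > 0` and `c_i(x^u) = 0` otherwise, extended linearly. -/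
def contract {n : ℕ} (i : Fin (n + 1)) (f : MvPolynomial (Fin (n + 1)) ℂ) :
    MvPolynomial (Fin (n + 1)) ℂ :=
  ∑ u ∈ f.support,
    if u i = 0 then 0 else monomial (u - Finsupp.single i 1) (f.coeff u)

/-- `S_1 ⌟ V`: the span of all contractions `c_i(f)` with `f ∈ V`. -/
def contractSpan {n : ℕ} (V : Submodule ℂ (MvPolynomial (Fin (n + 1)) ℂ)) :
    Submodule ℂ (MvPolynomial (Fin (n + 1)) ℂ) :=
  Submodule.span ℂ {g | ∃ i : Fin (n + 1), ∃ f ∈ V, g = contract i f}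

/-! Moving one unit of the exponent `u` from `x_a` to `x_b` gives the exponent
`u - e_a + e_b`, whose contraction by `x_b` is the contraction of `x^u` by `x_a`. If `e_a < e_b`
this exponent exceeds `u`, so for the largest monomial `x^u` outside `V` it lies in `V`.
Hence of two distinct contractions of `x^u`, the one along the smaller `e_a` lies in `S_1 ⌟ V`. -/

namespace Finsupp

variable {σ : Type*}

lemma single_one_le {u : σ →₀ ℕ} {a : σ} (hua : u a ≠ 0) : single a 1 ≤ u :=
  single_le_iff.mpr (Nat.one_le_iff_ne_zero.mpr hua)

lemma tsub_single_add_single_add_single {u : σ →₀ ℕ} {a : σ} (hua : u a ≠ 0) (b : σ) :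
    u - single a 1 + single b 1 + single a 1 = u + single b 1 := by
  rw [add_right_comm, tsub_add_cancel_of_le (single_one_le hua)]

lemma sum_tsub_single_add_single [Fintype σ] {u : σ →₀ ℕ} {a : σ} (hua : u a ≠ 0) (b : σ) :
    ∑ j, (u - single a 1 + single b 1 : σ →₀ ℕ) j = ∑ j, u j := by
  classical
  have h := congrArg (fun w : σ →₀ ℕ => ∑ j, w j) (tsub_single_add_single_add_single hua b)
  simp only [coe_add, Pi.add_apply, Finset.sum_add_distrib, single_apply, Finset.sum_ite_eq,
    Finset.mem_univ, if_true] at h ⊢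
  omega

lemma lt_tsub_single_add_single (lo : LinearOrder (σ →₀ ℕ))
    (hlo : ∀ a b c : σ →₀ ℕ, lo.lt a b → lo.lt (a + c) (b + c))
    {u : σ →₀ ℕ} {a b : σ} (hua : u a ≠ 0) (hab : lo.lt (single a 1) (single b 1)) :
    lo.lt u (u - single a 1 + single b 1) := by
  have h := hlo _ _ (u - single a 1) hab
  rwa [add_comm (single a 1), add_comm (single b 1), tsub_add_cancel_of_le (single_one_le hua)] at h

end Finsupp

section Contraction

variable {n : ℕ}

lemma contract_monomial (i : Fin (n + 1)) (u : Fin (n + 1) →₀ ℕ) (c : ℂ) :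
    contract i (monomial u c) =
      if u i = 0 then 0 else monomial (u - Finsupp.single i 1) c := by
  by_cases hc : c = 0
  · simp [hc, contract]
  · rw [contract, support_monomial, if_neg hc, Finset.sum_singleton, coeff_monomial, if_pos rfl]

lemma contract_monomial_of_eq_zero {i : Fin (n + 1)} {u : Fin (n + 1) →₀ ℕ} (hu : u i = 0)
    (c : ℂ) : contract i (monomial u c) = 0 := by
  rw [contract_monomial, if_pos hu]

lemma contract_monomial_eq_contract_exchange {u : Fin (n + 1) →₀ ℕ} {a : Fin (n + 1)}
    (hua : u a ≠ 0) (b : Fin (n + 1)) (c : ℂ) :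
    contract a (monomial u c) =
      contract b (monomial (u - Finsupp.single a 1 + Finsupp.single b 1) c) := by
  rw [contract_monomial, contract_monomial, if_neg hua, if_neg (by simp), add_tsub_cancel_right]

lemma contract_mem_contractSpan (i : Fin (n + 1)) {V : Submodule ℂ (MvPolynomial (Fin (n + 1)) ℂ)}
    {f : MvPolynomial (Fin (n + 1)) ℂ} (hf : f ∈ V) : contract i f ∈ contractSpan V :=
  Submodule.subset_span ⟨i, f, hf, rfl⟩

lemma contract_monomial_mem_contractSpan_of_single_lt (lo : LinearOrder (Fin (n + 1) →₀ ℕ))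
    (hlo : ∀ a b c : Fin (n + 1) →₀ ℕ, lo.lt a b → lo.lt (a + c) (b + c))
    {V : Submodule ℂ (MvPolynomial (Fin (n + 1)) ℂ)} {u : Fin (n + 1) →₀ ℕ}
    (hmax : ∀ v : Fin (n + 1) →₀ ℕ, ∑ j, v j = ∑ j, u j → monomial v (1 : ℂ) ∉ V → lo.le v u)
    {a b : Fin (n + 1)} (hab : lo.lt (Finsupp.single a 1) (Finsupp.single b 1)) :
    contract a (monomial u 1) ∈ contractSpan V := by
  by_cases hua : u a = 0
  · rw [contract_monomial_of_eq_zero hua]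
    exact zero_mem _
  have hwV : monomial (u - Finsupp.single a 1 + Finsupp.single b 1) (1 : ℂ) ∈ V := by
    by_contra hw
    exact (lo.lt_iff_le_not_ge _ _).mp (Finsupp.lt_tsub_single_add_single lo hlo hua hab)
      |>.2 (hmax _ (Finsupp.sum_tsub_single_add_single hua b) hw)
  rw [contract_monomial_eq_contract_exchange hua b]
  exact contract_mem_contractSpan b hwV

end Contraction

theorem at_most_one_contraction_escapes_general (n k : ℕ)
    (lo : LinearOrder (Fin (n + 1) →₀ ℕ))
    (hlo : ∀ a b c : Fin (n + 1) →₀ ℕ, lo.lt a b → lo.lt (a + c) (b + c))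
    (Vk : Submodule ℂ (MvPolynomial (Fin (n + 1)) ℂ))
    (u : Fin (n + 1) →₀ ℕ) (hu : ∑ j, u j = k)
    (hmax : ∀ v : Fin (n + 1) →₀ ℕ, (∑ j, v j = k) →
      (monomial v 1 : MvPolynomial (Fin (n + 1)) ℂ) ∉ Vk → lo.le v u) :
    ∀ i i' : Fin (n + 1),
      contract i (monomial u 1) ∉ contractSpan Vk →
      contract i' (monomial u 1) ∉ contractSpan Vk → i = i' := by
  intro i i' hi hi'
  by_contra hne
  have hmax' : ∀ v, ∑ j, v j = ∑ j, u j → monomial v (1 : ℂ) ∉ Vk → lo.le v u :=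
    fun v hv => hmax v (hv.trans hu)
  have hsingle : Finsupp.single i 1 ≠ Finsupp.single i' 1 :=
    fun h => hne (Finsupp.single_left_injective one_ne_zero h)
  rcases @lt_or_gt_of_ne _ lo _ _ hsingle with hlt | hlt
  · exact hi (contract_monomial_mem_contractSpan_of_single_lt lo hlo hmax' hlt)
  · exact hi' (contract_monomial_mem_contractSpan_of_single_lt lo hlo hmax' hlt)

/-- If `x^u` is the largest degree-`k` monomial not in a proper subspace `V_k ⊊ S*_k`,
then there is at most one `i` with `c_i(x^u) ∉ S_1 ⌟ V_k`. -/
theorem at_most_one_contraction_escapes (n k : ℕ) (hn : 1 ≤ n) (hk : 1 ≤ k)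
    (lo : LinearOrder (Fin (n + 1) →₀ ℕ))
    (hlo : ∀ a b c : Fin (n + 1) →₀ ℕ, lo.lt a b → lo.lt (a + c) (b + c))
    (Vk : Submodule ℂ (MvPolynomial (Fin (n + 1)) ℂ))
    (hVk : Vk ≤ homogeneousSubmodule (Fin (n + 1)) ℂ k)
    (hproper : Vk ≠ homogeneousSubmodule (Fin (n + 1)) ℂ k)
    (u : Fin (n + 1) →₀ ℕ) (hu : ∑ j, u j = k)
    (humem : (monomial u 1 : MvPolynomial (Fin (n + 1)) ℂ) ∉ Vk)
    (hmax : ∀ v : Fin (n + 1) →₀ ℕ, (∑ j, v j = k) →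
      (monomial v 1 : MvPolynomial (Fin (n + 1)) ℂ) ∉ Vk → lo.le v u) :
    ∀ i i' : Fin (n + 1),
      contract i (monomial u 1) ∉ contractSpan Vk →
      contract i' (monomial u 1) ∉ contractSpan Vk → i = i' :=
  at_most_one_contraction_escapes_general n k lo hlo Vk u hu hmax
end
end

section
/- Let n ≥ 1, r ≥ 2, and let J ⊊ S = ℂ[α_0,…,α_n] be a proper homogeneous ideal such that H_{S/J}(k) ≤ H_{S/J}(k+1) for every k ≥ 0 and H_{S/J}(k) = r for all sufficiently large k. Let a be the smallest integer with dim_ℂ S_a ≥ r and b the largest integer with H_{S/J}(b) ≠ r. For a ≤ k ≤ b let n_k be the smallest integer such that W_k := (J_k)^⊥ + span(the n_k largest monomials of S_k with respect to the fixed monomial order) has dimension r, and define the graded subspace I ⊆ S by I_k = 0 for k < a, I_k = (W_k)^⊥ for a ≤ k ≤ b, and I_k = J_k for k > b. Then dim_ℂ (S/I)_k = min(dim_ℂ S_k, r) for every k ≥ 0. -/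
open MvPolynomial

noncomputable section

/-- The standard graded polynomial ring `S = ℂ[α_0,…,α_n]`. -/
abbrev PS (n : ℕ) : Type := MvPolynomial (Fin (n + 1)) ℂ

/-- The space `S_k` of homogeneous polynomials of degree `k`. -/
def hsub (n k : ℕ) : Submodule ℂ (PS n) := homogeneousSubmodule (Fin (n + 1)) ℂ k

/-- The degree-`k` graded piece `J_k = J ∩ S_k` of an ideal. -/
def idealPiece (n : ℕ) (J : Ideal (PS n)) (k : ℕ) : Submodule ℂ (PS n) :=
  Submodule.restrictScalars ℂ J ⊓ hsub n k

/-- A homogeneous ideal: `J = ⊕_k J_k`. -/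
def IsHomog (n : ℕ) (J : Ideal (PS n)) : Prop :=
  Submodule.restrictScalars ℂ J = ⨆ k : ℕ, idealPiece n J k

/-- The Hilbert function of `S/J`: `H_{S/J}(k) = dim S_k − dim J_k`. -/
def HF (n : ℕ) (J : Ideal (PS n)) (k : ℕ) : ℕ :=
  Module.finrank ℂ ↥(hsub n k) - Module.finrank ℂ ↥(idealPiece n J k)

/-- Pairing against `f` for the bilinear form making the monomials orthonormal:
`g ↦ ⟨g, f⟩ = ∑_u g_u f_u`. -/
def pairLM (n : ℕ) (f : PS n) : PS n →ₗ[ℂ] ℂ :=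
  ∑ u ∈ f.support, f.coeff u • lcoeff ℂ u

/-- The orthogonal complement of `U` inside `S_k` with respect to the bilinear form making the
monomials an orthonormal basis. -/
def perp (n k : ℕ) (U : Submodule ℂ (PS n)) : Submodule ℂ (PS n) :=
  hsub n k ⊓ ⨅ f ∈ U, LinearMap.ker (pairLM n f)

/-- The span of a finite set of monomials. -/
def spanMon (n : ℕ) (M : Finset (Fin (n + 1) →₀ ℕ)) : Submodule ℂ (PS n) :=
  Submodule.span ℂ {p : PS n | ∃ u ∈ M, p = monomial u 1}

/-- `M` is the set of the `|M|` largest degree-`k` monomials: all its elements have degree `k`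
and dominate every degree-`k` monomial outside of `M`. -/
def TopSeg (n k : ℕ) (lo : LinearOrder (Fin (n + 1) →₀ ℕ))
    (M : Finset (Fin (n + 1) →₀ ℕ)) : Prop :=
  (∀ u ∈ M, ∑ j, u j = k) ∧
    ∀ u ∈ M, ∀ v : Fin (n + 1) →₀ ℕ, (∑ j, v j = k) → v ∉ M → lo.lt v u

/-- `W_k = (J_k)^⊥ + span(the given monomials in degree k)`. -/
def Wsp (n : ℕ) (J : Ideal (PS n)) (M : ℕ → Finset (Fin (n + 1) →₀ ℕ)) (k : ℕ) :
    Submodule ℂ (PS n) :=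
  perp n k (idealPiece n J k) ⊔ spanMon n (M k)

/-- The degree-`k` piece of the ideal `I`: `0` for `k < a`, `(W_k)^⊥` for `a ≤ k ≤ b`,
and `J_k` for `k > b`. -/
def Ipiece (n : ℕ) (J : Ideal (PS n)) (M : ℕ → Finset (Fin (n + 1) →₀ ℕ)) (a b k : ℕ) :
    Submodule ℂ (PS n) :=
  (⨆ _ : a ≤ k ∧ k ≤ b, perp n k (Wsp n J M k)) ⊔ (⨆ _ : b < k, idealPiece n J k)

/-! Since every piece `I_k` lies in `S_k` and the `S_k` are independent, `I ∩ S_k = I_k`, so the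
claim is a codimension count in each degree. For `k < a` we have `I_k = 0` and `dim S_k < r`; for
`k > b` we have `I_k = J_k`, of codimension `H_{S/J}(k) = r`; and for `a ≤ k ≤ b` the pairing that
makes the monomials orthonormal is nondegenerate on `S_k`, so `I_k = W_k^⊥` has codimension
`dim W_k = r ≤ dim S_k`. -/

open Module

theorem iSup_inf_eq_of_iSupIndep {ι α : Type*} [CompleteLattice α] [IsModularLattice α]
    {H V : ι → α} (hH : iSupIndep H) (hV : ∀ i, V i ≤ H i) (k : ι) :
    (⨆ i, V i) ⊓ H k = V k := by
  have hrest : (⨆ (i) (_ : i ≠ k), V i) ⊓ H k = ⊥ :=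
    ((hH k).mono_right (iSup₂_mono fun i _ => hV i)).symm.eq_bot
  rw [iSup_split_single V k, sup_inf_assoc_of_le _ (hV k), hrest, sup_bot_eq]

section Graded

variable {n : ℕ}

instance (n k : ℕ) : FiniteDimensional ℂ (hsub n k) :=
  Module.Finite.iff_fg.mpr (homogeneousSubmodule_fg _ _ k)

theorem hsub_iSupIndep (n : ℕ) : iSupIndep (hsub n) :=
  letI : DirectSum.Decomposition (hsub n) := decomposition
  (DirectSum.Decomposition.isInternal (hsub n)).submodule_iSupIndep

theorem monomial_mem_hsub {k : ℕ} {u : Fin (n + 1) →₀ ℕ} (hu : ∑ j, u j = k) :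
    (monomial u 1 : PS n) ∈ hsub n k :=
  isHomogeneous_monomial 1 (by rwa [← Finsupp.degree_eq_sum] at hu)

theorem spanMon_le_hsub {k : ℕ} {M : Finset (Fin (n + 1) →₀ ℕ)}
    (hM : ∀ u ∈ M, ∑ j, u j = k) : spanMon n M ≤ hsub n k := by
  rw [spanMon, Submodule.span_le]
  rintro p ⟨u, hu, rfl⟩
  exact monomial_mem_hsub (hM u hu)

end Graded

section Pairing

variable {n : ℕ}

theorem pairLM_apply_of_support_subset {f : PS n} {s : Finset (Fin (n + 1) →₀ ℕ)}
    (hs : f.support ⊆ s) (g : PS n) :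
    pairLM n f g = ∑ u ∈ s, f.coeff u * g.coeff u := by
  simp only [pairLM, LinearMap.coe_sum, Finset.sum_apply, LinearMap.smul_apply, lcoeff_apply,
    smul_eq_mul]
  exact Finset.sum_subset hs fun u _ hu => by rw [notMem_support_iff.mp hu, zero_mul]

theorem pairLM_comm (f g : PS n) : pairLM n f g = pairLM n g f := by
  rw [pairLM_apply_of_support_subset (Finset.subset_union_left (s₂ := g.support)),
    pairLM_apply_of_support_subset (Finset.subset_union_right (s₁ := f.support))]
  simp only [mul_comm]

theorem pairLM_monomial (f : PS n) (u : Fin (n + 1) →₀ ℕ) :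
    pairLM n f (monomial u 1) = f.coeff u := by
  rw [pairLM_comm, pairLM_apply_of_support_subset (support_monomial_subset (a := (1 : ℂ)))]
  simp

def monomialPairing (n : ℕ) : LinearMap.BilinForm ℂ (PS n) :=
  LinearMap.mk₂ ℂ (fun f g => pairLM n f g)
    (fun f f' g => by simp only [pairLM_comm _ g, map_add])
    (fun c f g => by simp only [pairLM_comm _ g, map_smul])
    (fun f g g' => map_add _ g g')
    (fun c f g => map_smul _ c g)

theorem monomialPairing_apply (f g : PS n) : monomialPairing n f g = pairLM n f g := rfl

theorem monomialPairing_restrict_nondegenerate (k : ℕ) :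
    ((monomialPairing n).restrict (hsub n k)).Nondegenerate := by
  have hrefl : ((monomialPairing n).restrict (hsub n k)).IsRefl := fun x y h => by
    simpa [monomialPairing_apply, pairLM_comm] using h
  refine hrefl.nondegenerate_iff_separatingLeft.mpr fun x hx => ?_
  refine Subtype.ext (MvPolynomial.ext _ _ fun u => ?_)
  by_contra hu
  have hdeg : ∑ j, u j = k := by
    rw [← Finsupp.degree_eq_sum, Finsupp.degree_eq_weight_one]
    exact (mem_homogeneousSubmodule _ _).mp x.2 hu
  exact hu (by
    simpa [monomialPairing_apply, pairLM_monomial] using hx ⟨monomial u 1, monomial_mem_hsub hdeg⟩)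

theorem comap_perp {k : ℕ} {U : Submodule ℂ (PS n)} (hU : U ≤ hsub n k) :
    (perp n k U).comap (hsub n k).subtype =
      ((monomialPairing n).restrict (hsub n k)).orthogonal (U.comap (hsub n k).subtype) := by
  ext x
  simp only [perp, Submodule.mem_comap, Submodule.mem_inf, Submodule.mem_iInf,
    LinearMap.mem_ker, LinearMap.BilinForm.mem_orthogonal_iff,
    LinearMap.BilinForm.restrict_apply, Submodule.subtype_apply, SetLike.coe_mem, true_and]
  exact ⟨fun h y hy => h y hy, fun h f hf => h ⟨f, hU hf⟩ hf⟩

theorem finrank_perp_add_finrank {k : ℕ} {U : Submodule ℂ (PS n)} (hU : U ≤ hsub n k) :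
    finrank ℂ (perp n k U) + finrank ℂ U = finrank ℂ (hsub n k) := by
  have hperp : perp n k U ≤ hsub n k := inf_le_left
  rw [← (Submodule.comapSubtypeEquivOfLe hperp).finrank_eq,
    ← (Submodule.comapSubtypeEquivOfLe hU).finrank_eq, comap_perp hU,
    LinearMap.BilinForm.finrank_orthogonal (monomialPairing_restrict_nondegenerate k)]
  have := Submodule.finrank_le (U.comap (hsub n k).subtype)
  omega

end Pairing

section LiftedIdeal

variable {n : ℕ} {J : Ideal (PS n)} {M : ℕ → Finset (Fin (n + 1) →₀ ℕ)} {a b k : ℕ}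

theorem HF_le_finrank_hsub : HF n J k ≤ finrank ℂ (hsub n k) := Nat.sub_le _ _

theorem Wsp_le_hsub (hM : ∀ u ∈ M k, ∑ j, u j = k) : Wsp n J M k ≤ hsub n k :=
  sup_le inf_le_left (spanMon_le_hsub hM)

theorem Ipiece_le_hsub : Ipiece n J M a b k ≤ hsub n k :=
  sup_le (iSup_le fun _ => inf_le_left) (iSup_le fun _ => inf_le_right)

theorem iSup_Ipiece_inf_hsub : (⨆ k', Ipiece n J M a b k') ⊓ hsub n k = Ipiece n J M a b k :=
  iSup_inf_eq_of_iSupIndep (hsub_iSupIndep n) (fun _ => Ipiece_le_hsub) k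

theorem Ipiece_of_lt (hka : k < a) (hkb : k ≤ b) : Ipiece n J M a b k = ⊥ := by
  rw [Ipiece, iSup_neg (by omega), iSup_neg (by omega), bot_sup_eq]

theorem Ipiece_of_mem_Icc (hak : a ≤ k) (hkb : k ≤ b) :
    Ipiece n J M a b k = perp n k (Wsp n J M k) := by
  rw [Ipiece, iSup_pos ⟨hak, hkb⟩, iSup_neg (by omega), sup_bot_eq]

theorem Ipiece_of_gt (hbk : b < k) : Ipiece n J M a b k = idealPiece n J k := by
  rw [Ipiece, iSup_neg (by omega), iSup_pos hbk, bot_sup_eq]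

end LiftedIdeal

theorem lifted_subspace_has_generic_hilbert_function_general (n r : ℕ)
    (lo : LinearOrder (Fin (n + 1) →₀ ℕ))
    (J : Ideal (PS n))
    (a b : ℕ)
    (ha : r ≤ Module.finrank ℂ ↥(hsub n a) ∧
      ∀ a' < a, Module.finrank ℂ ↥(hsub n a') < r)
    (hb : HF n J b ≠ r ∧ ∀ k, b < k → HF n J k = r)
    (M : ℕ → Finset (Fin (n + 1) →₀ ℕ))
    (hM : ∀ k, a ≤ k → k ≤ b →
      TopSeg n k lo (M k) ∧
      Module.finrank ℂ ↥(Wsp n J M k) = r ∧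
      ∀ M' : Finset (Fin (n + 1) →₀ ℕ), TopSeg n k lo M' → M'.card < (M k).card →
        Module.finrank ℂ ↥(perp n k (idealPiece n J k) ⊔ spanMon n M') ≠ r) :
    ∀ k : ℕ,
      Module.finrank ℂ ↥(hsub n k) -
          Module.finrank ℂ ↥((⨆ k' : ℕ, Ipiece n J M a b k') ⊓ hsub n k) =
        min (Module.finrank ℂ ↥(hsub n k)) r := by
  intro k
  rw [iSup_Ipiece_inf_hsub]
  rcases lt_or_ge k a with hka | hak
  · have hkb : k ≤ b := not_lt.mp fun hbk =>
      (hb.2 k hbk ▸ HF_le_finrank_hsub).not_gt (ha.2 k hka)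
    rw [Ipiece_of_lt hka hkb, finrank_bot, Nat.sub_zero, min_eq_left (ha.2 k hka).le]
  rcases le_or_gt k b with hkb | hbk
  · obtain ⟨hTop, hW, -⟩ := hM k hak hkb
    have hWle := Wsp_le_hsub (J := J) hTop.1
    have hcodim := finrank_perp_add_finrank hWle
    have hrk := Submodule.finrank_mono hWle
    rw [Ipiece_of_mem_Icc hak hkb]
    omega
  · have hHF := hb.2 k hbk
    rw [HF] at hHF
    rw [Ipiece_of_gt hbk]
    omega

/-- Proposition 4.3(b): the graded subspace `I` built from `J` by enlarging each graded piece
`J_k` (for `a ≤ k ≤ b`) by the largest monomials satisfies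
`dim (S/I)_k = min(dim S_k, r)` for every `k`. -/
theorem lifted_subspace_has_generic_hilbert_function (n r : ℕ) (hn : 1 ≤ n) (hr : 2 ≤ r)
    (lo : LinearOrder (Fin (n + 1) →₀ ℕ))
    (hlo : ∀ u v w : Fin (n + 1) →₀ ℕ, lo.lt u v → lo.lt (u + w) (v + w))
    (J : Ideal (PS n)) (hJne : J ≠ ⊤) (hJhom : IsHomog n J)
    (hmono : ∀ k : ℕ, HF n J k ≤ HF n J (k + 1))
    (hstab : ∃ N : ℕ, ∀ k, N ≤ k → HF n J k = r)
    (a b : ℕ)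
    (ha : r ≤ Module.finrank ℂ ↥(hsub n a) ∧
      ∀ a' < a, Module.finrank ℂ ↥(hsub n a') < r)
    (hb : HF n J b ≠ r ∧ ∀ k, b < k → HF n J k = r)
    (M : ℕ → Finset (Fin (n + 1) →₀ ℕ))
    (hM : ∀ k, a ≤ k → k ≤ b →
      TopSeg n k lo (M k) ∧
      Module.finrank ℂ ↥(Wsp n J M k) = r ∧
      ∀ M' : Finset (Fin (n + 1) →₀ ℕ), TopSeg n k lo M' → M'.card < (M k).card →
        Module.finrank ℂ ↥(perp n k (idealPiece n J k) ⊔ spanMon n M') ≠ r) :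
    ∀ k : ℕ,
      Module.finrank ℂ ↥(hsub n k) -
          Module.finrank ℂ ↥((⨆ k' : ℕ, Ipiece n J M a b k') ⊓ hsub n k) =
        min (Module.finrank ℂ ↥(hsub n k)) r :=
  lifted_subspace_has_generic_hilbert_function_general n r lo J a b ha hb M hM
end
end

section
/- With notation as in the context, given a homogeneous ideal I_X ⊆ S_X with H_{S_X/I_X} = h_{r,X}, the graded subspace J ⊆ S_{X×Y} defined by J_{(D,E)} = ℒ(E,1)·(S_X)_D + (S_Y)_E·(I_X)_D if (D,E) ∈ 𝒜, J_{(D,E)} = ℒ((D,E),r) if (D,E) ∈ ℬ, and J_{(D,E)} = 0 if (D,E) ∈ 𝒞, is an ideal of S_{X×Y}. -/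
open MvPolynomial

noncomputable section

/-- The variables of the Cox ring of a product of projective spaces. -/
abbrev PPVars (d : ℕ) (n : Fin d → ℕ) : Type := Σ i : Fin d, Fin (n i + 1)

/-- The ℤ^d-grading on the Cox ring of `X = ℙ^{n_1}×⋯×ℙ^{n_d}`: `deg α_{ij} = e_i`. -/
def wPP (d : ℕ) (n : Fin d → ℕ) : PPVars d n → (Fin d → ℕ) := fun p => Pi.single p.1 1

/-- The Cox ring of `X × Y`: polynomials in the `α`-variables (left) and `β`-variables (right). -/
abbrev CoxXY (d e : ℕ) (n : Fin d → ℕ) (m : Fin e → ℕ) : Type :=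
  MvPolynomial (PPVars d n ⊕ PPVars e m) ℂ

/-- The ℤ^{d+e}-grading on the Cox ring of `X × Y`. -/
def wXY (d e : ℕ) (n : Fin d → ℕ) (m : Fin e → ℕ) :
    PPVars d n ⊕ PPVars e m → (Fin d → ℕ) × (Fin e → ℕ) :=
  Sum.elim (fun p => (Pi.single p.1 1, 0)) (fun q => (0, Pi.single q.1 1))

/-- The degree-`D` component of the Cox ring of `X`. -/
def coxPieceX (d : ℕ) (n : Fin d → ℕ) (D : Fin d → ℕ) :
    Submodule ℂ (MvPolynomial (PPVars d n) ℂ) :=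
  weightedHomogeneousSubmodule ℂ (wPP d n) D

/-- The degree-`(D,E)` component of the Cox ring of `X × Y`. -/
def coxPieceXY (d e : ℕ) (n : Fin d → ℕ) (m : Fin e → ℕ)
    (u : (Fin d → ℕ) × (Fin e → ℕ)) : Submodule ℂ (CoxXY d e n m) :=
  weightedHomogeneousSubmodule ℂ (wXY d e n m) u

/-- A homogeneous ideal of the Cox ring of `X`. -/
def IsHomogX (d : ℕ) (n : Fin d → ℕ) (I : Ideal (MvPolynomial (PPVars d n) ℂ)) : Prop :=
  Submodule.restrictScalars ℂ I =
    ⨆ D : Fin d → ℕ, (Submodule.restrictScalars ℂ I ⊓ coxPieceX d n D)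

/-- A homogeneous ideal of the Cox ring of `X × Y`. -/
def IsHomogXY (d e : ℕ) (n : Fin d → ℕ) (m : Fin e → ℕ) (K : Ideal (CoxXY d e n m)) : Prop :=
  Submodule.restrictScalars ℂ K =
    ⨆ u : (Fin d → ℕ) × (Fin e → ℕ), (Submodule.restrictScalars ℂ K ⊓ coxPieceXY d e n m u)

/-- The Hilbert function of `S_X/I`. -/
def HFX (d : ℕ) (n : Fin d → ℕ) (I : Ideal (MvPolynomial (PPVars d n) ℂ))
    (D : Fin d → ℕ) : ℕ :=
  Module.finrank ℂ ↥(coxPieceX d n D) -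
    Module.finrank ℂ ↥(Submodule.restrictScalars ℂ I ⊓ coxPieceX d n D)

/-- The Hilbert function of `S_{X×Y}/K`. -/
def HFXY (d e : ℕ) (n : Fin d → ℕ) (m : Fin e → ℕ) (K : Ideal (CoxXY d e n m))
    (u : (Fin d → ℕ) × (Fin e → ℕ)) : ℕ :=
  Module.finrank ℂ ↥(coxPieceXY d e n m u) -
    Module.finrank ℂ ↥(Submodule.restrictScalars ℂ K ⊓ coxPieceXY d e n m u)

/-- The `X`-part of an exponent vector of the Cox ring of `X × Y`. -/
def xPart {A B : Type*} (v : A ⊕ B →₀ ℕ) : A →₀ ℕ :=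
  (Finsupp.sumFinsuppEquivProdFinsupp v).1

/-- The `Y`-part of an exponent vector of the Cox ring of `X × Y`. -/
def yPart {A B : Type*} (v : A ⊕ B →₀ ℕ) : B →₀ ℕ :=
  (Finsupp.sumFinsuppEquivProdFinsupp v).2

/-- The product monomial order on `S_{X×Y}`:
`α^u β^v > α^{u'} β^{v'}` iff `β^v > β^{v'}`, or `β^v = β^{v'}` and `α^u > α^{u'}`. -/
def prodLt {A B : Type*} (lX : LinearOrder (A →₀ ℕ)) (lY : LinearOrder (B →₀ ℕ))
    (u v : A ⊕ B →₀ ℕ) : Prop :=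
  lY.lt (yPart u) (yPart v) ∨ (yPart u = yPart v ∧ lX.lt (xPart u) (xPart v))

/-- The number of monomials of the same degree as `v` that are smaller than `v`. -/
def smallerCount (d e : ℕ) (n : Fin d → ℕ) (m : Fin e → ℕ)
    (lX : LinearOrder (PPVars d n →₀ ℕ)) (lY : LinearOrder (PPVars e m →₀ ℕ))
    (v : PPVars d n ⊕ PPVars e m →₀ ℕ) : ℕ :=
  Set.ncard {v' : PPVars d n ⊕ PPVars e m →₀ ℕ |
    Finsupp.weight (wXY d e n m) v' = Finsupp.weight (wXY d e n m) v ∧ prodLt lX lY v' v}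

/-- `ℒ(u,s)`: the span of all degree-`u` monomials of `S_{X×Y}` except the `s` smallest ones,
i.e. of those degree-`u` monomials having at least `s` smaller monomials of the same degree. -/
def LL (d e : ℕ) (n : Fin d → ℕ) (m : Fin e → ℕ)
    (lX : LinearOrder (PPVars d n →₀ ℕ)) (lY : LinearOrder (PPVars e m →₀ ℕ))
    (u : (Fin d → ℕ) × (Fin e → ℕ)) (s : ℕ) : Submodule ℂ (CoxXY d e n m) :=
  Submodule.span ℂ {p : CoxXY d e n m | ∃ v : PPVars d n ⊕ PPVars e m →₀ ℕ,
    Finsupp.weight (wXY d e n m) v = u ∧ s ≤ smallerCount d e n m lX lY v ∧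
    p = monomial v 1}

/-- The image in `S_{X×Y}` of the graded piece `(I_X)_D ⊆ S_X`. -/
def IXemb (d e : ℕ) (n : Fin d → ℕ) (m : Fin e → ℕ)
    (IX : Ideal (MvPolynomial (PPVars d n) ℂ)) (D : Fin d → ℕ) :
    Submodule ℂ (CoxXY d e n m) :=
  Submodule.map (MvPolynomial.rename
      (Sum.inl : PPVars d n → PPVars d n ⊕ PPVars e m)).toLinearMap
    (Submodule.restrictScalars ℂ IX ⊓ coxPieceX d n D)

/-- The degree-`(D,E)` piece of the graded subspace `J`:
`ℒ(E,1)·(S_X)_D + (S_Y)_E·(I_X)_D` if `(D,E) ∈ 𝒜` (i.e. `dim (S_X)_D ≥ r`),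
`ℒ((D,E),r)` if `(D,E) ∈ ℬ` (i.e. `dim (S_X)_D < r ≤ dim (S_{X×Y})_{(D,E)}`), and `0` if
`(D,E) ∈ 𝒞` (i.e. `dim (S_{X×Y})_{(D,E)} < r`). -/
def Jpiece (r d e : ℕ) (n : Fin d → ℕ) (m : Fin e → ℕ)
    (lX : LinearOrder (PPVars d n →₀ ℕ)) (lY : LinearOrder (PPVars e m →₀ ℕ))
    (IX : Ideal (MvPolynomial (PPVars d n) ℂ))
    (u : (Fin d → ℕ) × (Fin e → ℕ)) : Submodule ℂ (CoxXY d e n m) :=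
  if r ≤ Module.finrank ℂ ↥(coxPieceX d n u.1) then
    LL d e n m lX lY (0, u.2) 1 * coxPieceXY d e n m (u.1, 0) ⊔
      coxPieceXY d e n m (0, u.2) * IXemb d e n m IX u.1
  else if r ≤ Module.finrank ℂ ↥(coxPieceXY d e n m u) then LL d e n m lX lY u r
  else ⊥


/-!
A sum of graded pieces is an ideal once multiplication by each variable maps the piece of
degree `u` into the piece of degree `u + deg`. Graded pieces only grow in dimension, so along
multiplication a degree moves through the regimes `𝒞`, `ℬ`, `𝒜` in this order, and within one
regime the claim follows from the compatibility of the monomial orders with multiplication. The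
one genuine transition is `ℬ → 𝒜`: if `dim (S_X)_D < r` and a monomial `α^a β^b` has at least `r`
smaller monomials of its degree, then `β^b` is not the smallest monomial of its degree (otherwise
all of them would be `α^{a'} β^b` with `α^{a'} < α^a`, fewer than `dim (S_X)_D`), so
`ℒ((D,E),r) ⊆ ℒ(E,1)·(S_X)_D` and the `ℬ`-piece already lies in the `𝒜`-formula.
-/

open Finsupp

section Parts

variable {A B : Type*}

@[simp] lemma xPart_apply (v : A ⊕ B →₀ ℕ) (a : A) : xPart v a = v (Sum.inl a) := rfl

@[simp] lemma yPart_apply (v : A ⊕ B →₀ ℕ) (b : B) : yPart v b = v (Sum.inr b) := rfl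

lemma xPart_add (u v : A ⊕ B →₀ ℕ) : xPart (u + v) = xPart u + xPart v := by
  ext; simp

lemma yPart_add (u v : A ⊕ B →₀ ℕ) : yPart (u + v) = yPart u + yPart v := by
  ext; simp

lemma xPart_yPart_injective : Function.Injective fun v : A ⊕ B →₀ ℕ => (xPart v, yPart v) :=
  sumFinsuppEquivProdFinsupp.injective

def eL (x : A →₀ ℕ) : A ⊕ B →₀ ℕ := sumFinsuppEquivProdFinsupp.symm (x, 0)

def eR (y : B →₀ ℕ) : A ⊕ B →₀ ℕ := sumFinsuppEquivProdFinsupp.symm (0, y)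

@[simp] lemma xPart_eL (x : A →₀ ℕ) : xPart (eL x : A ⊕ B →₀ ℕ) = x := by simp [xPart, eL]

@[simp] lemma yPart_eL (x : A →₀ ℕ) : yPart (eL x : A ⊕ B →₀ ℕ) = 0 := by simp [yPart, eL]

@[simp] lemma xPart_eR (y : B →₀ ℕ) : xPart (eR y : A ⊕ B →₀ ℕ) = 0 := by simp [xPart, eR]

@[simp] lemma yPart_eR (y : B →₀ ℕ) : yPart (eR y : A ⊕ B →₀ ℕ) = y := by simp [yPart, eR]

lemma eL_xPart_add_eR_yPart (v : A ⊕ B →₀ ℕ) : eL (xPart v) + eR (yPart v) = v :=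
  xPart_yPart_injective (by simp [xPart_add, yPart_add])

end Parts

section Weights

variable {d e : ℕ} {n : Fin d → ℕ} {m : Fin e → ℕ}

lemma add_wXY_inl (u : (Fin d → ℕ) × (Fin e → ℕ)) (t : PPVars d n) :
    u + wXY d e n m (.inl t) = (u.1 + wPP d n t, u.2) := by
  ext <;> simp [wXY, wPP]

lemma add_wXY_inr (u : (Fin d → ℕ) × (Fin e → ℕ)) (t : PPVars e m) :
    u + wXY d e n m (.inr t) = (u.1, u.2 + wPP e m t) := by
  ext <;> simp [wXY, wPP]

lemma weight_wXY (v : PPVars d n ⊕ PPVars e m →₀ ℕ) :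
    weight (wXY d e n m) v = (weight (wPP d n) (xPart v), weight (wPP e m) (yPart v)) := by
  simp only [weight_eq_sum, Fintype.sum_sum_type, xPart_apply, yPart_apply]
  simp [wXY, wPP, Prod.ext_iff, Prod.fst_sum, Prod.snd_sum]

end Weights

lemma finite_setOf_weight_wPP_eq (d : ℕ) (n : Fin d → ℕ) (D : Fin d → ℕ) :
    {a : PPVars d n →₀ ℕ | weight (wPP d n) a = D}.Finite := by
  refine (finite_of_degree_eq (∑ i, D i)).subset fun a (ha : weight _ a = D) => ?_
  simp only [← ha, weight_eq_sum, degree_eq_sum, Finset.sum_apply, wPP]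
  rw [Finset.sum_comm]
  simp [Pi.single_apply]

lemma finite_setOf_weight_wXY_eq (d e : ℕ) (n : Fin d → ℕ) (m : Fin e → ℕ)
    (u : (Fin d → ℕ) × (Fin e → ℕ)) :
    {v : PPVars d n ⊕ PPVars e m →₀ ℕ | weight (wXY d e n m) v = u}.Finite := by
  refine ((finite_setOf_weight_wPP_eq d n u.1).prod (finite_setOf_weight_wPP_eq e m u.2)).preimage
    xPart_yPart_injective.injOn |>.subset fun v (hv : weight _ v = u) => ?_
  simp [← hv, weight_wXY]

lemma finrank_weightedHomogeneousSubmodule {K σ M : Type*} [Field K] [AddCommMonoid M]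
    (w : σ → M) (u : M) (h : {v : σ →₀ ℕ | weight w v = u}.Finite) :
    Module.finrank K (weightedHomogeneousSubmodule K w u) =
      {v : σ →₀ ℕ | weight w v = u}.ncard := by
  have := h.fintype
  rw [weightedHomogeneousSubmodule_eq_finsupp_supported,
    (AddMonoidAlgebra.supportedEquivFinsupp _).finrank_eq, Module.finrank_finsupp_self,
    ← Nat.card_eq_fintype_card, Nat.card_coe_set_eq]

lemma ncard_setOf_weight_eq_le_add {σ M : Type*} [AddCommMonoid M] (w : σ → M) (u : M) (s : σ)
    (h : {v : σ →₀ ℕ | weight w v = u + w s}.Finite) :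
    {v : σ →₀ ℕ | weight w v = u}.ncard ≤ {v : σ →₀ ℕ | weight w v = u + w s}.ncard := by
  refine Set.ncard_le_ncard_of_injOn (· + single s 1) (fun v (hv : weight w v = u) => ?_)
    (add_left_injective _).injOn h
  simp [hv, weight_single]

lemma finrank_coxPieceX (d : ℕ) (n : Fin d → ℕ) (D : Fin d → ℕ) :
    Module.finrank ℂ (coxPieceX d n D) = {a : PPVars d n →₀ ℕ | weight (wPP d n) a = D}.ncard :=
  finrank_weightedHomogeneousSubmodule _ _ (finite_setOf_weight_wPP_eq d n D)

lemma finrank_coxPieceXY (d e : ℕ) (n : Fin d → ℕ) (m : Fin e → ℕ)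
    (u : (Fin d → ℕ) × (Fin e → ℕ)) :
    Module.finrank ℂ (coxPieceXY d e n m u) =
      {v : PPVars d n ⊕ PPVars e m →₀ ℕ | weight (wXY d e n m) v = u}.ncard :=
  finrank_weightedHomogeneousSubmodule _ _ (finite_setOf_weight_wXY_eq d e n m u)

lemma finrank_coxPieceX_le_fst_add (d e : ℕ) (n : Fin d → ℕ) (m : Fin e → ℕ)
    (u : (Fin d → ℕ) × (Fin e → ℕ)) (s : PPVars d n ⊕ PPVars e m) :
    Module.finrank ℂ (coxPieceX d n u.1) ≤
      Module.finrank ℂ (coxPieceX d n (u + wXY d e n m s).1) := by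
  rcases s with t | t
  · rw [finrank_coxPieceX, finrank_coxPieceX]
    exact ncard_setOf_weight_eq_le_add _ _ t (finite_setOf_weight_wPP_eq d n _)
  · rw [add_wXY_inr]

lemma finrank_coxPieceXY_le_add (d e : ℕ) (n : Fin d → ℕ) (m : Fin e → ℕ)
    (u : (Fin d → ℕ) × (Fin e → ℕ)) (s : PPVars d n ⊕ PPVars e m) :
    Module.finrank ℂ (coxPieceXY d e n m u) ≤
      Module.finrank ℂ (coxPieceXY d e n m (u + wXY d e n m s)) := by
  rw [finrank_coxPieceXY, finrank_coxPieceXY]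
  exact ncard_setOf_weight_eq_le_add _ _ s (finite_setOf_weight_wXY_eq d e n m _)

section SmallerCount

variable {d e : ℕ} {n : Fin d → ℕ} {m : Fin e → ℕ}
  {lX : LinearOrder (PPVars d n →₀ ℕ)} {lY : LinearOrder (PPVars e m →₀ ℕ)}

lemma finite_setOf_smaller (v : PPVars d n ⊕ PPVars e m →₀ ℕ) :
    {v' | weight (wXY d e n m) v' = weight (wXY d e n m) v ∧ prodLt lX lY v' v}.Finite :=
  (finite_setOf_weight_wXY_eq d e n m _).subset fun _ hv' => hv'.1

lemma smallerCount_le_smallerCount_add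
    (hlX : ∀ u v w : PPVars d n →₀ ℕ, lX.lt u v → lX.lt (u + w) (v + w))
    (hlY : ∀ u v w : PPVars e m →₀ ℕ, lY.lt u v → lY.lt (u + w) (v + w))
    (v w : PPVars d n ⊕ PPVars e m →₀ ℕ) :
    smallerCount d e n m lX lY v ≤ smallerCount d e n m lX lY (v + w) := by
  refine Set.ncard_le_ncard_of_injOn (· + w) (fun v' ⟨hweight, hlt⟩ => ⟨?_, ?_⟩)
    (add_left_injective _).injOn (finite_setOf_smaller _)
  · simp [hweight]
  · rcases hlt with hy | ⟨hy, hx⟩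
    · exact Or.inl (by simpa only [yPart_add] using hlY _ _ _ hy)
    · exact Or.inr ⟨by simp only [yPart_add, hy], by simpa only [xPart_add] using hlX _ _ _ hx⟩

lemma one_le_smallerCount_eR {y y' : PPVars e m →₀ ℕ}
    (hweight : weight (wPP e m) y' = weight (wPP e m) y) (hlt : lY.lt y' y) :
    1 ≤ smallerCount d e n m lX lY (eR y) :=
  (Set.ncard_pos (finite_setOf_smaller _)).mpr
    ⟨eR y', by simp [weight_wXY, hweight], Or.inl (by simpa)⟩

lemma smallerCount_lt_ncard (v : PPVars d n ⊕ PPVars e m →₀ ℕ)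
    (hmin : ∀ y', weight (wPP e m) y' = weight (wPP e m) (yPart v) → ¬ lY.lt y' (yPart v)) :
    smallerCount d e n m lX lY v <
      {a : PPVars d n →₀ ℕ | weight (wPP d n) a = weight (wPP d n) (xPart v)}.ncard := by
  set T := {a : PPVars d n →₀ ℕ | weight (wPP d n) a = weight (wPP d n) (xPart v)}
  have hsame : ∀ v', weight (wXY d e n m) v' = weight (wXY d e n m) v → prodLt lX lY v' v →
      xPart v' ∈ T ∧ yPart v' = yPart v ∧ lX.lt (xPart v') (xPart v) := by
    intro v' hweight hlt
    simp only [weight_wXY, Prod.ext_iff] at hweight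
    rcases hlt with hy | ⟨hy, hx⟩
    · exact absurd hy (hmin _ hweight.2)
    · exact ⟨hweight.1, hy, hx⟩
  calc smallerCount d e n m lX lY v ≤ (T \ {xPart v}).ncard := by
        refine Set.ncard_le_ncard_of_injOn xPart (fun v' ⟨hweight, hlt⟩ => ?_) ?_
          ((finite_setOf_weight_wPP_eq d n _).sdiff)
        · obtain ⟨hT, -, hx⟩ := hsame v' hweight hlt
          exact ⟨hT, fun h => @lt_irrefl _ lX.toPreorder _ (h ▸ hx)⟩
        · intro v₁ ⟨hw₁, hlt₁⟩ v₂ ⟨hw₂, hlt₂⟩ hx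
          exact xPart_yPart_injective (Prod.ext hx
            ((hsame v₁ hw₁ hlt₁).2.1.trans (hsame v₂ hw₂ hlt₂).2.1.symm))
    _ < T.ncard := Set.ncard_sdiff_singleton_lt_of_mem rfl (finite_setOf_weight_wPP_eq d n _)

end SmallerCount

lemma MvPolynomial.X_mul_monomial {σ R : Type*} [CommSemiring R] (s : σ) (v : σ →₀ ℕ) (a : R) :
    X s * monomial v a = monomial (v + single s 1) a := by
  rw [X, monomial_mul, one_mul, add_comm]

section LL

variable {d e : ℕ} {n : Fin d → ℕ} {m : Fin e → ℕ}
  {lX : LinearOrder (PPVars d n →₀ ℕ)} {lY : LinearOrder (PPVars e m →₀ ℕ)}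

lemma monomial_mem_LL {u : (Fin d → ℕ) × (Fin e → ℕ)} {k : ℕ} {v : PPVars d n ⊕ PPVars e m →₀ ℕ}
    (hweight : weight (wXY d e n m) v = u) (hk : k ≤ smallerCount d e n m lX lY v) :
    monomial v 1 ∈ LL d e n m lX lY u k :=
  Submodule.subset_span ⟨v, hweight, hk, rfl⟩

lemma LL_le_comap_mul_X
    (hlX : ∀ u v w : PPVars d n →₀ ℕ, lX.lt u v → lX.lt (u + w) (v + w))
    (hlY : ∀ u v w : PPVars e m →₀ ℕ, lY.lt u v → lY.lt (u + w) (v + w))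
    (s : PPVars d n ⊕ PPVars e m) (u : (Fin d → ℕ) × (Fin e → ℕ)) (k : ℕ) :
    LL d e n m lX lY u k ≤
      (LL d e n m lX lY (u + wXY d e n m s) k).comap (LinearMap.mulLeft ℂ (X s)) := by
  refine Submodule.span_le.mpr ?_
  rintro _ ⟨v, rfl, hk, rfl⟩
  rw [SetLike.mem_coe, Submodule.mem_comap, LinearMap.mulLeft_apply, X_mul_monomial]
  exact monomial_mem_LL (by simp [weight_single])
    (hk.trans (smallerCount_le_smallerCount_add hlX hlY v _))

lemma LL_le_LL_one_mul_coxPieceXY {r : ℕ} {u : (Fin d → ℕ) × (Fin e → ℕ)}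
    (hr : Module.finrank ℂ (coxPieceX d n u.1) < r) :
    LL d e n m lX lY u r ≤ LL d e n m lX lY (0, u.2) 1 * coxPieceXY d e n m (u.1, 0) := by
  refine Submodule.span_le.mpr ?_
  rintro _ ⟨v, hweight, hk, rfl⟩
  simp only [weight_wXY, Prod.ext_iff] at hweight
  obtain ⟨y', hy'weight, hy'lt⟩ : ∃ y', weight (wPP e m) y' = weight (wPP e m) (yPart v) ∧
      lY.lt y' (yPart v) := by
    by_contra hnone
    have := smallerCount_lt_ncard (lX := lX) v fun y' hw hlt => hnone ⟨y', hw, hlt⟩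
    rw [hweight.1, ← finrank_coxPieceX] at this
    omega
  rw [SetLike.mem_coe, ← eL_xPart_add_eR_yPart v, add_comm, ← mul_one (1 : ℂ), ← monomial_mul]
  refine Submodule.mul_mem_mul (monomial_mem_LL (by simp [weight_wXY, hweight.2])
    (one_le_smallerCount_eR hy'weight hy'lt)) ?_
  exact isWeightedHomogeneous_monomial _ _ _ (by simp [weight_wXY, hweight.1])

end LL

lemma Submodule.mul_le_comap_mulLeft {R S : Type*} [CommSemiring R] [CommSemiring S] [Algebra R S]
    {a : S} {A B C : Submodule R S} (h : A ≤ C.comap (LinearMap.mulLeft R a)) :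
    A * B ≤ (C * B).comap (LinearMap.mulLeft R a) :=
  Submodule.mul_le.mpr fun _ hp _ hq => by
    rw [Submodule.mem_comap, LinearMap.mulLeft_apply, ← mul_assoc]
    exact Submodule.mul_mem_mul (h hp) hq

lemma iSup_le_comap_iSup {R M : Type*} [Semiring R] [AddCommMonoid M] [Module R M] {ι : Type*}
    {P : ι → Submodule R M} {f : M →ₗ[R] M} (g : ι → ι) (h : ∀ i, P i ≤ (P (g i)).comap f) :
    ⨆ i, P i ≤ (⨆ i, P i).comap f :=
  iSup_le fun i => (h i).trans (Submodule.comap_mono (le_iSup P (g i)))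

lemma MvPolynomial.exists_ideal_restrictScalars_eq {σ R : Type*} [CommSemiring R]
    (M : Submodule R (MvPolynomial σ R)) (h : ∀ s, M ≤ M.comap (LinearMap.mulLeft R (X s))) :
    ∃ I : Ideal (MvPolynomial σ R), I.restrictScalars R = M := by
  have hmul : ∀ c x, x ∈ M → c * x ∈ M := by
    intro c
    induction c using MvPolynomial.induction_on with
    | C a => intro x hx; simpa [← smul_eq_C_mul] using M.smul_mem a hx
    | add p q hp hq => intro x hx; simpa [add_mul] using add_mem (hp x hx) (hq x hx)
    | mul_X p s hp => intro x hx; simpa [mul_assoc] using hp _ (h s hx)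
  exact ⟨{ M.toAddSubmonoid with smul_mem' := fun c x hx => hmul c x hx }, rfl⟩

section Pieces

variable {d e : ℕ} {n : Fin d → ℕ} {m : Fin e → ℕ}

lemma coxPieceXY_le_comap_mul_X (s : PPVars d n ⊕ PPVars e m) (u : (Fin d → ℕ) × (Fin e → ℕ)) :
    coxPieceXY d e n m u ≤
      (coxPieceXY d e n m (u + wXY d e n m s)).comap (LinearMap.mulLeft ℂ (X s)) := fun _ hq => by
  have := (isWeightedHomogeneous_X ℂ (wXY d e n m) s).mul hq
  rwa [add_comm] at this

lemma IXemb_le_comap_mul_X (IX : Ideal (MvPolynomial (PPVars d n) ℂ)) (t : PPVars d n)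
    (D : Fin d → ℕ) :
    IXemb d e n m IX D ≤
      (IXemb d e n m IX (D + wPP d n t)).comap (LinearMap.mulLeft ℂ (X (Sum.inl t))) := by
  rintro _ ⟨p, ⟨hpI, hpD⟩, rfl⟩
  refine ⟨X t * p, ⟨IX.mul_mem_left _ hpI, ?_⟩, by simp⟩
  have := (isWeightedHomogeneous_X ℂ (wPP d n) t).mul hpD
  rwa [add_comm] at this

end Pieces

section Jpiece

variable {r d e : ℕ} {n : Fin d → ℕ} {m : Fin e → ℕ}
  {lX : LinearOrder (PPVars d n →₀ ℕ)} {lY : LinearOrder (PPVars e m →₀ ℕ)}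
  {IX : Ideal (MvPolynomial (PPVars d n) ℂ)}

variable (r d e n m lX lY IX) in
/-- The formula defining `J_{(D,E)}` for `(D,E) ∈ 𝒜`, taken in every degree. -/
def JpieceA (u : (Fin d → ℕ) × (Fin e → ℕ)) : Submodule ℂ (CoxXY d e n m) :=
  LL d e n m lX lY (0, u.2) 1 * coxPieceXY d e n m (u.1, 0) ⊔
    coxPieceXY d e n m (0, u.2) * IXemb d e n m IX u.1

lemma JpieceA_le_comap_mul_X
    (hlX : ∀ u v w : PPVars d n →₀ ℕ, lX.lt u v → lX.lt (u + w) (v + w))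
    (hlY : ∀ u v w : PPVars e m →₀ ℕ, lY.lt u v → lY.lt (u + w) (v + w))
    (s : PPVars d n ⊕ PPVars e m) (u : (Fin d → ℕ) × (Fin e → ℕ)) :
    JpieceA d e n m lX lY IX u ≤
      (JpieceA d e n m lX lY IX (u + wXY d e n m s)).comap (LinearMap.mulLeft ℂ (X s)) := by
  rcases s with t | t
  · have hX := coxPieceXY_le_comap_mul_X (m := m) (.inl t) (u.1, 0)
    rw [add_wXY_inl] at hX ⊢
    refine sup_le ?_ ?_
    · rw [Submodule.mul_comm]
      refine (Submodule.mul_le_comap_mulLeft hX).trans (Submodule.comap_mono ?_)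
      rw [Submodule.mul_comm]
      exact le_sup_left
    · rw [Submodule.mul_comm]
      refine (Submodule.mul_le_comap_mulLeft (IXemb_le_comap_mul_X IX t u.1)).trans
        (Submodule.comap_mono ?_)
      rw [Submodule.mul_comm]
      exact le_sup_right
  · have hLL := LL_le_comap_mul_X hlX hlY (.inr t) (0, u.2) 1
    have hY := coxPieceXY_le_comap_mul_X (n := n) (.inr t) (0, u.2)
    rw [add_wXY_inr] at hLL hY ⊢
    exact sup_le ((Submodule.mul_le_comap_mulLeft hLL).trans (Submodule.comap_mono le_sup_left))
      ((Submodule.mul_le_comap_mulLeft hY).trans (Submodule.comap_mono le_sup_right))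

lemma Jpiece_of_le (u : (Fin d → ℕ) × (Fin e → ℕ))
    (hA : r ≤ Module.finrank ℂ (coxPieceX d n u.1)) :
    Jpiece r d e n m lX lY IX u = JpieceA d e n m lX lY IX u :=
  if_pos hA

lemma Jpiece_of_lt_of_le (u : (Fin d → ℕ) × (Fin e → ℕ))
    (hA : Module.finrank ℂ (coxPieceX d n u.1) < r)
    (hB : r ≤ Module.finrank ℂ (coxPieceXY d e n m u)) :
    Jpiece r d e n m lX lY IX u = LL d e n m lX lY u r := by
  rw [Jpiece, if_neg hA.not_ge, if_pos hB]

lemma Jpiece_of_lt_of_lt (u : (Fin d → ℕ) × (Fin e → ℕ))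
    (hA : Module.finrank ℂ (coxPieceX d n u.1) < r)
    (hB : Module.finrank ℂ (coxPieceXY d e n m u) < r) :
    Jpiece r d e n m lX lY IX u = ⊥ := by
  rw [Jpiece, if_neg hA.not_ge, if_neg hB.not_ge]

lemma Jpiece_le_comap_mul_X
    (hlX : ∀ u v w : PPVars d n →₀ ℕ, lX.lt u v → lX.lt (u + w) (v + w))
    (hlY : ∀ u v w : PPVars e m →₀ ℕ, lY.lt u v → lY.lt (u + w) (v + w))
    (s : PPVars d n ⊕ PPVars e m) (u : (Fin d → ℕ) × (Fin e → ℕ)) :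
    Jpiece r d e n m lX lY IX u ≤
      (Jpiece r d e n m lX lY IX (u + wXY d e n m s)).comap (LinearMap.mulLeft ℂ (X s)) := by
  have hAmono := finrank_coxPieceX_le_fst_add d e n m u s
  have hBmono := finrank_coxPieceXY_le_add d e n m u s
  rcases le_or_gt r (Module.finrank ℂ (coxPieceX d n u.1)) with hA | hA
  · rw [Jpiece_of_le u hA, Jpiece_of_le _ (hA.trans hAmono)]
    exact JpieceA_le_comap_mul_X hlX hlY s u
  rcases le_or_gt r (Module.finrank ℂ (coxPieceXY d e n m u)) with hB | hB
  · rw [Jpiece_of_lt_of_le u hA hB]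
    rcases le_or_gt r (Module.finrank ℂ (coxPieceX d n (u + wXY d e n m s).1)) with hA' | hA'
    · rw [Jpiece_of_le _ hA']
      exact ((LL_le_LL_one_mul_coxPieceXY hA).trans le_sup_left).trans
        (JpieceA_le_comap_mul_X hlX hlY s u)
    · rw [Jpiece_of_lt_of_le _ hA' (hB.trans hBmono)]
      exact LL_le_comap_mul_X hlX hlY s u r
  · rw [Jpiece_of_lt_of_lt u hA hB]
    exact bot_le

end Jpiece

theorem graded_subspace_is_ideal_general (r d e : ℕ)
    (n : Fin d → ℕ) (m : Fin e → ℕ)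
    (lX : LinearOrder (PPVars d n →₀ ℕ))
    (hlX : ∀ u v w : PPVars d n →₀ ℕ, lX.lt u v → lX.lt (u + w) (v + w))
    (lY : LinearOrder (PPVars e m →₀ ℕ))
    (hlY : ∀ u v w : PPVars e m →₀ ℕ, lY.lt u v → lY.lt (u + w) (v + w))
    (IX : Ideal (MvPolynomial (PPVars d n) ℂ)) :
    ∃ JI : Ideal (CoxXY d e n m),
      Submodule.restrictScalars ℂ JI =
        ⨆ u : (Fin d → ℕ) × (Fin e → ℕ), Jpiece r d e n m lX lY IX u :=
  MvPolynomial.exists_ideal_restrictScalars_eq _ fun s =>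
    iSup_le_comap_iSup (· + wXY d e n m s) (Jpiece_le_comap_mul_X hlX hlY s)

/-- Lemma 3.1 for products of projective spaces: the graded subspace `J` associated to a
homogeneous ideal `I_X ⊆ S_X` with Hilbert function `h_{r,X}` is an ideal of `S_{X×Y}`. -/
theorem graded_subspace_is_ideal (r d e : ℕ) (hr : 1 ≤ r) (hd : 1 ≤ d) (he : 1 ≤ e)
    (n : Fin d → ℕ) (m : Fin e → ℕ) (hn : ∀ i, 1 ≤ n i) (hm : ∀ j, 1 ≤ m j)
    (lX : LinearOrder (PPVars d n →₀ ℕ))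
    (hlX : ∀ u v w : PPVars d n →₀ ℕ, lX.lt u v → lX.lt (u + w) (v + w))
    (lY : LinearOrder (PPVars e m →₀ ℕ))
    (hlY : ∀ u v w : PPVars e m →₀ ℕ, lY.lt u v → lY.lt (u + w) (v + w))
    (IX : Ideal (MvPolynomial (PPVars d n) ℂ))
    (hIXhom : IsHomogX d n IX)
    (hIXHF : ∀ D : Fin d → ℕ, HFX d n IX D = min (Module.finrank ℂ ↥(coxPieceX d n D)) r) :
    ∃ JI : Ideal (CoxXY d e n m),
      Submodule.restrictScalars ℂ JI =
        ⨆ u : (Fin d → ℕ) × (Fin e → ℕ), Jpiece r d e n m lX lY IX u :=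
  graded_subspace_is_ideal_general r d e n m lX hlX lY hlY IX
end
end
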